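/- arXiv:1908.10491 — 6 statements merged into one kernel-verified Lean document; each statement's English description precedes it below -/
import Mathlib

section
/- Let S be the closed segment in ℝ² from (a,1) to (b,2) and let P be the closed segment from (a',1) to (b',2). Then S ∩ P ≠ ∅ if and only if ( a ≤ a' and b' ≤ b ) or ( a' ≤ a and b ≤ b' ). -/
/-! Both segments are parametrised by height, so they meet iff for some `t ∈ [0, 1]` the
horizontal positions agree, i.e. iff `t ↦ (1 - t)(a - a') + t(b - b')` vanishes on `[0, 1]`,
i.e. iff `0` lies between `a - a'` and `b - b'`. -/

/-- A segment between the horizontal lines `L₁ = {y = 1}` and `L₂ = {y = 2}`,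
given by its two endpoints, each of which lies on `L₁` or `L₂`. -/
structure IPSeg where
  p : ℝ × ℝ
  q : ℝ × ℝ
  hp : p.2 = 1 ∨ p.2 = 2
  hq : q.2 = 1 ∨ q.2 = 2

namespace IPSeg

/-- The closed line segment in `ℝ²` determined by the two endpoints. -/
def carrier (s : IPSeg) : Set (ℝ × ℝ) := segment ℝ s.p s.q

/-- An interval segment: both endpoints on the same horizontal line. -/
def IsInterval (s : IPSeg) : Prop := s.p.2 = s.q.2

/-- A permutation segment: one endpoint on each horizontal line. -/
def IsPermutation (s : IPSeg) : Prop := s.p.2 ≠ s.q.2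

/-- The (set of) endpoints of the segment. -/
def endpoints (s : IPSeg) : Set (ℝ × ℝ) := {s.p, s.q}

end IPSeg

/-- An IP-SEG model of a graph: distinct vertices are adjacent iff their segments meet. -/
def IsIPSEGModel {V : Type*} (G : SimpleGraph V) (s : V → IPSeg) : Prop :=
  ∀ u v : V, u ≠ v → (G.Adj u v ↔ ((s u).carrier ∩ (s v).carrier).Nonempty)

/-- An IP-SEG* model: an IP-SEG model in which all interval segments lie on one line. -/
def IsIPSEGStarModel {V : Type*} (G : SimpleGraph V) (s : V → IPSeg) : Prop :=
  IsIPSEGModel G s ∧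
    ∃ c : ℝ, (c = 1 ∨ c = 2) ∧ ∀ v : V, (s v).IsInterval → (s v).p.2 = c

open AffineMap Set

section

variable {𝕜 E : Type*} [Field 𝕜] [LinearOrder 𝕜] [IsStrictOrderedRing 𝕜]
  [AddCommGroup E] [Module 𝕜 E]

theorem segment_inter_segment_nonempty_iff_zero_mem_segment {y₁ y₂ : 𝕜} (hy : y₁ ≠ y₂)
    (a b a' b' : E) :
    (segment 𝕜 (a, y₁) (b, y₂) ∩ segment 𝕜 (a', y₁) (b', y₂)).Nonempty ↔
      (0 : E) ∈ segment 𝕜 (a - a') (b - b') := by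
  simp only [segment_eq_image_lineMap, ← vsub_eq_sub, ← lineMap_vsub_lineMap]
  constructor
  · rintro ⟨_, ⟨t, ht, rfl⟩, s, -, hst⟩
    obtain rfl : s = t := lineMap_injective 𝕜 hy (by simpa using congrArg Prod.snd hst)
    exact ⟨s, ht, by simpa [vsub_eq_sub, sub_eq_zero] using (congrArg Prod.fst hst).symm⟩
  · rintro ⟨t, ht, h⟩
    refine ⟨lineMap (a, y₁) (b, y₂) t, ⟨t, ht, rfl⟩, t, ht, Prod.ext ?_ rfl⟩
    simpa using (sub_eq_zero.mp h).symm

theorem zero_mem_segment_iff {u v : 𝕜} : 0 ∈ segment 𝕜 u v ↔ u ≤ 0 ∧ 0 ≤ v ∨ v ≤ 0 ∧ 0 ≤ u := by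
  rw [segment_eq_uIcc, mem_uIcc]

end

/-- Two permutation segments, from `(a,1)` to `(b,2)` and from `(a',1)` to `(b',2)`,
intersect iff one of them "dominates" the other on both lines, i.e. iff
`(a ≤ a' ∧ b' ≤ b) ∨ (a' ≤ a ∧ b ≤ b')`. -/
theorem permutation_permutation_intersect (a b a' b' : ℝ) :
    (segment ℝ ((a, 1) : ℝ × ℝ) (b, 2) ∩ segment ℝ ((a', 1) : ℝ × ℝ) (b', 2)).Nonempty ↔
      (a ≤ a' ∧ b' ≤ b) ∨ (a' ≤ a ∧ b ≤ b') := by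
  rw [segment_inter_segment_nonempty_iff_zero_mem_segment (by norm_num), zero_mem_segment_iff]
  simp only [sub_nonpos, sub_nonneg, and_comm (a := b ≤ b')]
end

section
/- Every IP-SEG graph G on n vertices admits an IP-SEG model in which the x-coordinate of every segment endpoint belongs to {1, 2, …, 2n} and no two segments assigned to distinct vertices share an endpoint. Moreover, if G admits an IP-SEG* model then it admits such a model that is additionally an IP-SEG* model. -/
/-- A "nice" model: every endpoint has `x`-coordinate an integer in `{1, …, 2n}`
(where `n` is the number of vertices), and segments of distinct vertices share
no endpoint. -/
def NiceModel {V : Type} [Fintype V] (s : V → IPSeg) : Prop :=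
  (∀ v : V, ∀ e ∈ (s v).endpoints,
      ∃ k : ℕ, 1 ≤ k ∧ k ≤ 2 * Fintype.card V ∧ e.1 = (k : ℝ)) ∧
  (∀ u v : V, u ≠ v → ∀ e ∈ (s u).endpoints, e ∉ (s v).endpoints)

/-!
Only the relative order of the endpoint `x`-coordinates matters: two interval segments on a
common line meet iff their intervals overlap, an interval segment meets a permutation segment iff
it contains the latter's endpoint on its line, and two permutation segments meet iff
`(bot - bot') * (top - top') ≤ 0`. So one sorts the `2n` endpoints by a key refining the order of
their `x`-coordinates and replaces every `x`-coordinate by its rank; the tie-breaking in the key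
keeps meeting pairs meeting and separates the endpoints of distinct vertices.
-/

open Set

lemma zero_mem_segment_iff_mul_nonpos {d e : ℝ} : (0 : ℝ) ∈ segment ℝ d e ↔ d * e ≤ 0 := by
  rw [segment_eq_uIcc, mem_uIcc, mul_nonpos_iff]
  tauto

lemma sub_mul_sub_nonpos_iff_of_ne {x y z w : ℝ} (hxy : x ≠ y) (hzw : z ≠ w) :
    (x - y) * (z - w) ≤ 0 ↔ (x < y ↔ w < z) := by
  rw [mul_nonpos_iff, sub_nonneg, sub_nonneg, sub_nonpos, sub_nonpos, le_iff_lt_or_eq,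
    le_iff_lt_or_eq, le_iff_lt_or_eq, le_iff_lt_or_eq]
  simp only [hxy, hxy.symm, hzw, hzw.symm, or_false]
  constructor <;> intro h <;> grind

lemma exists_rank {ι K : Type*} [Fintype ι] [LinearOrder K] (κ : ι → K) :
    ∃ r : ι → ℕ, (∀ i j, r i ≤ r j ↔ κ i ≤ κ j) ∧ ∀ i, 1 ≤ r i ∧ r i ≤ Fintype.card ι := by
  classical
  have hκ (i : ι) : κ i ∈ Finset.univ.image κ := Finset.mem_image_of_mem κ (Finset.mem_univ i)
  let e := (Finset.univ.image κ).orderIsoOfFin rfl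
  refine ⟨fun i => e.symm ⟨κ i, hκ i⟩ + 1, fun i j => ?_, fun i => ⟨Nat.le_add_left _ _, ?_⟩⟩
  · rw [Nat.add_le_add_iff_right, ← Fin.le_def, e.symm.le_iff_le, Subtype.mk_le_mk]
  · have hlt := (e.symm ⟨κ i, hκ i⟩).isLt
    have hcard := Finset.card_image_le (s := Finset.univ) (f := κ)
    rw [Finset.card_univ] at hcard
    show _ + 1 ≤ _
    omega

namespace IPSeg

def interval (c : ℝ) (hc : c = 1 ∨ c = 2) (a b : ℝ) : IPSeg := ⟨(a, c), (b, c), hc, hc⟩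

def permutation (a b : ℝ) : IPSeg := ⟨(a, 1), (b, 2), Or.inl rfl, Or.inr rfl⟩

lemma carrier_interval {c : ℝ} (hc : c = 1 ∨ c = 2) {a b : ℝ} (hab : a ≤ b) :
    (interval c hc a b).carrier = Icc a b ×ˢ {c} := by
  rw [carrier, interval, ← Prod.image_mk_segment_left, segment_eq_Icc hab, prod_singleton]

lemma mem_carrier_permutation {a b : ℝ} {z : ℝ × ℝ} :
    z ∈ (permutation a b).carrier ↔ ∃ θ ∈ Icc (0 : ℝ) 1, ((1 - θ) * a + θ * b, 1 + θ) = z := by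
  simp only [carrier, permutation, segment_eq_image, mem_image, Prod.smul_mk, Prod.mk_add_mk,
    smul_eq_mul]
  refine exists_congr fun θ => and_congr_right fun _ => ?_
  ring_nf

lemma interval_inter_interval_nonempty_iff {c c' : ℝ} (hc : c = 1 ∨ c = 2) (hc' : c' = 1 ∨ c' = 2)
    {a b a' b' : ℝ} (hab : a ≤ b) (hab' : a' ≤ b') :
    ((interval c hc a b).carrier ∩ (interval c' hc' a' b').carrier).Nonempty ↔
      c = c' ∧ a ≤ b' ∧ a' ≤ b := by
  rw [carrier_interval hc hab, carrier_interval hc' hab', prod_inter_prod, prod_nonempty_iff,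
    Icc_inter_Icc, nonempty_Icc, singleton_inter_nonempty, max_le_iff, le_min_iff, le_min_iff]
  simp only [mem_singleton_iff, hab, hab', true_and, and_true]
  tauto

lemma interval_inter_permutation_nonempty_iff {c : ℝ} (hc : c = 1 ∨ c = 2) {a b a' b' : ℝ}
    (hab : a ≤ b) :
    ((interval c hc a b).carrier ∩ (permutation a' b').carrier).Nonempty ↔
      (2 - c) * a' + (c - 1) * b' ∈ Icc a b := by
  rw [carrier_interval hc hab]
  constructor
  · rintro ⟨z, ⟨hz1, hz2⟩, hz⟩
    obtain ⟨θ, -, rfl⟩ := mem_carrier_permutation.1 hz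
    obtain rfl : θ = c - 1 := by simp only [mem_singleton_iff] at hz2; linarith
    convert hz1 using 1
    ring
  · intro h
    refine ⟨((2 - c) * a' + (c - 1) * b', c), ⟨h, rfl⟩, mem_carrier_permutation.2 ⟨c - 1, ?_, ?_⟩⟩
    · rcases hc with rfl | rfl <;> norm_num
    · ext <;> simp only <;> ring

lemma permutation_inter_permutation_nonempty_iff {a b a' b' : ℝ} :
    ((permutation a b).carrier ∩ (permutation a' b').carrier).Nonempty ↔
      (a - a') * (b - b') ≤ 0 := by
  rw [← zero_mem_segment_iff_mul_nonpos, segment_eq_image]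
  constructor
  · rintro ⟨z, hz, hz'⟩
    obtain ⟨θ, hθ, rfl⟩ := mem_carrier_permutation.1 hz
    obtain ⟨θ', -, h⟩ := mem_carrier_permutation.1 hz'
    obtain ⟨hx, hy⟩ := Prod.mk.inj h
    obtain rfl : θ = θ' := by linarith
    exact ⟨θ, hθ, by simp only [smul_eq_mul]; linarith⟩
  · rintro ⟨θ, hθ, h⟩
    refine ⟨_, mem_carrier_permutation.2 ⟨θ, hθ, rfl⟩, mem_carrier_permutation.2 ⟨θ, hθ, ?_⟩⟩
    simp only [smul_eq_mul] at h
    exact Prod.ext (by linarith) rfl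

noncomputable def lo (s : IPSeg) : ℝ := min s.p.1 s.q.1

noncomputable def hi (s : IPSeg) : ℝ := max s.p.1 s.q.1

noncomputable def bot (s : IPSeg) : ℝ := if s.p.2 = 1 then s.p.1 else s.q.1

noncomputable def top (s : IPSeg) : ℝ := if s.p.2 = 1 then s.q.1 else s.p.1

lemma lo_le_hi (s : IPSeg) : s.lo ≤ s.hi := min_le_max

lemma carrier_eq_interval {s : IPSeg} (h : s.IsInterval) :
    s.carrier = (interval s.p.2 s.hp s.lo s.hi).carrier := by
  obtain ⟨⟨x, y⟩, ⟨x', y'⟩, hp, hq⟩ := s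
  obtain rfl : y = y' := h
  rcases le_total x x' with hx | hx
  · simp [carrier, interval, lo, hi, hx]
  · simp [carrier, interval, lo, hi, hx, segment_symm]

lemma carrier_eq_permutation {s : IPSeg} (h : s.IsPermutation) :
    s.carrier = (permutation s.bot s.top).carrier := by
  obtain ⟨⟨x, y⟩, ⟨x', y'⟩, hp | hp, hq | hq⟩ := s <;> dsimp only at hp hq <;> subst hp hq <;>
    simp_all [IsPermutation, carrier, permutation, bot, top, segment_symm]

open scoped Classical in
noncomputable def relabel (s : IPSeg) (a b : ℝ) : IPSeg :=
  if s.IsInterval then interval s.p.2 s.hp a b else permutation a b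

lemma relabel_of_isInterval {s : IPSeg} (h : s.IsInterval) (a b : ℝ) :
    s.relabel a b = interval s.p.2 s.hp a b := if_pos h

lemma relabel_of_isPermutation {s : IPSeg} (h : s.IsPermutation) (a b : ℝ) :
    s.relabel a b = permutation a b := if_neg h

lemma isInterval_of_isInterval_relabel {s : IPSeg} {a b : ℝ} (h : (s.relabel a b).IsInterval) :
    s.IsInterval ∧ (s.relabel a b).p.2 = s.p.2 := by
  by_cases hs : s.IsInterval
  · exact ⟨hs, by rw [relabel_of_isInterval hs]; rfl⟩
  · rw [relabel_of_isPermutation hs] at h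
    norm_num [IsInterval, permutation] at h

lemma fst_eq_of_mem_endpoints_relabel {s : IPSeg} {a b : ℝ} {e : ℝ × ℝ}
    (he : e ∈ (s.relabel a b).endpoints) : e.1 = a ∨ e.1 = b := by
  unfold relabel at he
  split_ifs at he <;> rcases he with rfl | rfl <;> simp [interval, permutation]

end IPSeg

open IPSeg

abbrev SortKey := ℝ ×ₗ ℕ ×ₗ ℝ ×ₗ ℤ

def sortKey (x : ℝ) (zone : ℕ) (y : ℝ) (tag : ℤ) : SortKey :=
  toLex (x, toLex (zone, toLex (y, tag)))

lemma sortKey_lt_sortKey {x x' y y' : ℝ} {m m' : ℕ} {z z' : ℤ} :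
    sortKey x m y z < sortKey x' m' y' z' ↔
      x < x' ∨ x = x' ∧ (m < m' ∨ m = m' ∧ (y < y' ∨ y = y' ∧ z < z')) := by
  simp only [sortKey, Prod.Lex.lt_iff, ofLex_toLex]

lemma sortKey_le_sortKey_of_lt {x x' y y' : ℝ} {m m' : ℕ} {z z' : ℤ} (h : m < m') :
    sortKey x m y z ≤ sortKey x' m' y' z' ↔ x ≤ x' := by
  simp only [sortKey, Prod.Lex.le_iff, ofLex_toLex, h, h.ne]
  simp [le_iff_lt_or_eq, or_comm]

lemma tag_eq_of_sortKey_eq {x x' y y' : ℝ} {m m' : ℕ} {z z' : ℤ}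
    (h : sortKey x m y z = sortKey x' m' y' z') : z = z' := by
  simp only [sortKey, toLex_inj, Prod.mk.injEq] at h
  exact h.2.2.2

lemma sortKey_cross_iff (a b a' b' : ℝ) (m m' : ℤ) :
    (sortKey a 1 (-b) (-m) < sortKey a' 1 (-b') (-m') ↔
        sortKey b' 1 (-a') m' < sortKey b 1 (-a) m) ↔ (a - a') * (b - b') ≤ 0 := by
  simp only [sortKey_lt_sortKey, lt_irrefl, true_and, false_or, neg_lt_neg_iff, neg_inj]
  rw [mul_nonpos_iff, sub_nonneg, sub_nonneg, sub_nonpos, sub_nonpos]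
  rcases lt_trichotomy a a' with h | rfl | h
  · simp [h, h.not_gt, h.ne, le_iff_lt_or_eq, eq_comm]
  · simp only [lt_irrefl, le_refl, true_and, false_or, eq_comm (a := b), iff_self, true_iff]
    exact le_total b b'
  · simp [h, h.not_gt, h.ne', le_iff_lt_or_eq, eq_comm]

section Relabel

variable {V : Type*} (s : V → IPSeg) (idx : V → ℕ)

/- `(v, false)` and `(v, true)` are the left and right ends of an interval segment, or the bottom
and top ends of a permutation segment. At equal `x`, zones `0 < 1 < 2` put left ends of intervals
before permutation ends before right ends of intervals, so contacts are preserved. Ties between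
permutation ends are broken by `-(other end)` and then by the tag `∓ idx v`, reversed between
bottoms and tops, so that permutation segments with a common endpoint are ranked as crossing.
Since `|tag| = idx v`, distinct vertices get distinct keys. -/
open scoped Classical in
noncomputable def endpointKey : V × Bool → SortKey
  | (v, false) => if (s v).IsInterval then sortKey (s v).lo 0 0 (idx v)
      else sortKey (s v).bot 1 (-(s v).top) (-(idx v))
  | (v, true) => if (s v).IsInterval then sortKey (s v).hi 2 0 (idx v)
      else sortKey (s v).top 1 (-(s v).bot) (idx v)

variable {s idx}

lemma eq_of_endpointKey_eq (hidx : Function.Injective idx) {u v : V} {i j : Bool}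
    (h : endpointKey s idx (u, i) = endpointKey s idx (v, j)) : u = v := by
  refine hidx ?_
  cases i <;> cases j <;> simp only [endpointKey] at h <;> split_ifs at h <;>
    have := tag_eq_of_sortKey_eq h <;> omega

noncomputable def relabelBy (s : V → IPSeg) (r : V × Bool → ℕ) (v : V) : IPSeg :=
  (s v).relabel (r (v, false)) (r (v, true))

variable {r : V × Bool → ℕ} (hr : ∀ i j, r i ≤ r j ↔ endpointKey s idx i ≤ endpointKey s idx j)
include hr

lemma eq_of_rank_eq (hidx : Function.Injective idx) {u v : V} {i j : Bool}
    (h : r (u, i) = r (v, j)) : u = v :=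
  eq_of_endpointKey_eq hidx (le_antisymm ((hr _ _).1 h.le) ((hr _ _).1 h.ge))

lemma cast_le_cast_iff_endpointKey_le (i j : V × Bool) :
    (r i : ℝ) ≤ r j ↔ endpointKey s idx i ≤ endpointKey s idx j :=
  Nat.cast_le.trans (hr i j)

lemma cast_lt_cast_iff_endpointKey_lt (i j : V × Bool) :
    (r i : ℝ) < r j ↔ endpointKey s idx i < endpointKey s idx j :=
  lt_iff_lt_of_le_iff_le (cast_le_cast_iff_endpointKey_le hr j i)

lemma cast_rank_false_le_true {v : V} (hv : (s v).IsInterval) :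
    (r (v, false) : ℝ) ≤ r (v, true) := by
  rw [cast_le_cast_iff_endpointKey_le hr]
  simp [endpointKey, hv, sortKey_le_sortKey_of_lt, lo_le_hi]

lemma relabelBy_inter_nonempty_iff_of_isInterval {u v : V} (hu : (s u).IsInterval)
    (hv : (s v).IsInterval) :
    ((relabelBy s r u).carrier ∩ (relabelBy s r v).carrier).Nonempty ↔
      ((s u).carrier ∩ (s v).carrier).Nonempty := by
  rw [relabelBy, relabelBy, relabel_of_isInterval hu, relabel_of_isInterval hv,
    interval_inter_interval_nonempty_iff _ _ (cast_rank_false_le_true hr hu)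
      (cast_rank_false_le_true hr hv),
    carrier_eq_interval hu, carrier_eq_interval hv,
    interval_inter_interval_nonempty_iff _ _ (lo_le_hi _) (lo_le_hi _),
    cast_le_cast_iff_endpointKey_le hr, cast_le_cast_iff_endpointKey_le hr]
  simp [endpointKey, hu, hv, sortKey_le_sortKey_of_lt]

lemma relabelBy_inter_nonempty_iff_of_isInterval_of_not_isInterval {u v : V}
    (hu : (s u).IsInterval) (hv : ¬(s v).IsInterval) :
    ((relabelBy s r u).carrier ∩ (relabelBy s r v).carrier).Nonempty ↔
      ((s u).carrier ∩ (s v).carrier).Nonempty := by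
  rw [relabelBy, relabelBy, relabel_of_isInterval hu, relabel_of_isPermutation hv,
    interval_inter_permutation_nonempty_iff _ (cast_rank_false_le_true hr hu),
    carrier_eq_interval hu, carrier_eq_permutation hv,
    interval_inter_permutation_nonempty_iff _ (lo_le_hi _)]
  rcases (s u).hp with hc | hc <;> rw [hc] <;>
    norm_num only [mem_Icc, one_mul, zero_mul, add_zero, zero_add] <;>
    rw [cast_le_cast_iff_endpointKey_le hr, cast_le_cast_iff_endpointKey_le hr] <;>
    simp [endpointKey, hu, hv, sortKey_le_sortKey_of_lt]

lemma relabelBy_inter_nonempty_iff_of_not_isInterval (hidx : Function.Injective idx) {u v : V}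
    (huv : u ≠ v) (hu : ¬(s u).IsInterval) (hv : ¬(s v).IsInterval) :
    ((relabelBy s r u).carrier ∩ (relabelBy s r v).carrier).Nonempty ↔
      ((s u).carrier ∩ (s v).carrier).Nonempty := by
  have hne (i : Bool) : (r (u, i) : ℝ) ≠ r (v, i) := fun h =>
    huv (eq_of_rank_eq hr hidx (by exact_mod_cast h))
  rw [relabelBy, relabelBy, relabel_of_isPermutation hu, relabel_of_isPermutation hv,
    permutation_inter_permutation_nonempty_iff, carrier_eq_permutation hu,
    carrier_eq_permutation hv, permutation_inter_permutation_nonempty_iff,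
    sub_mul_sub_nonpos_iff_of_ne (hne false) (hne true),
    cast_lt_cast_iff_endpointKey_lt hr, cast_lt_cast_iff_endpointKey_lt hr,
    ← sortKey_cross_iff _ _ _ _ (idx u) (idx v)]
  simp only [endpointKey, if_neg hu, if_neg hv]

lemma relabelBy_inter_nonempty_iff (hidx : Function.Injective idx) {u v : V} (huv : u ≠ v) :
    ((relabelBy s r u).carrier ∩ (relabelBy s r v).carrier).Nonempty ↔
      ((s u).carrier ∩ (s v).carrier).Nonempty := by
  by_cases hu : (s u).IsInterval <;> by_cases hv : (s v).IsInterval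
  · exact relabelBy_inter_nonempty_iff_of_isInterval hr hu hv
  · exact relabelBy_inter_nonempty_iff_of_isInterval_of_not_isInterval hr hu hv
  · rw [inter_comm, inter_comm (s u).carrier]
    exact relabelBy_inter_nonempty_iff_of_isInterval_of_not_isInterval hr hv hu
  · exact relabelBy_inter_nonempty_iff_of_not_isInterval hr hidx huv hu hv

end Relabel

lemma niceModel_relabelBy {V : Type} [Fintype V] {s : V → IPSeg} {idx : V → ℕ}
    {r : V × Bool → ℕ} (hr : ∀ i j, r i ≤ r j ↔ endpointKey s idx i ≤ endpointKey s idx j)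
    (hidx : Function.Injective idx) (hbd : ∀ i, 1 ≤ r i ∧ r i ≤ 2 * Fintype.card V) :
    NiceModel (relabelBy s r) := by
  have hfst {v : V} {e : ℝ × ℝ} (he : e ∈ (relabelBy s r v).endpoints) :
      ∃ i, e.1 = r (v, i) := by
    rcases fst_eq_of_mem_endpoints_relabel he with h | h
    exacts [⟨false, h⟩, ⟨true, h⟩]
  refine ⟨fun v e he => ?_, fun u v huv e heu hev => ?_⟩
  · obtain ⟨i, hi⟩ := hfst he
    exact ⟨r (v, i), (hbd _).1, (hbd _).2, hi⟩
  · obtain ⟨i, hi⟩ := hfst heu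
    obtain ⟨j, hj⟩ := hfst hev
    exact huv (eq_of_rank_eq hr hidx (by exact_mod_cast hi.symm.trans hj))

theorem exists_nice_relabel {V : Type} [Fintype V] (s : V → IPSeg) :
    ∃ t : V → IPSeg, NiceModel t ∧
      (∀ u v, u ≠ v → (((t u).carrier ∩ (t v).carrier).Nonempty ↔
        ((s u).carrier ∩ (s v).carrier).Nonempty)) ∧
      ∀ v, (t v).IsInterval → (s v).IsInterval ∧ (t v).p.2 = (s v).p.2 := by
  let idx (v : V) : ℕ := Fintype.equivFin V v
  have hidx : Function.Injective idx := Fin.val_injective.comp (Fintype.equivFin V).injective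
  obtain ⟨r, hr, hbd⟩ := exists_rank (endpointKey s idx)
  rw [Fintype.card_prod, Fintype.card_bool, mul_comm] at hbd
  exact ⟨relabelBy s r, niceModel_relabelBy hr hidx hbd,
    fun u v huv => relabelBy_inter_nonempty_iff hr hidx huv,
    fun v hv => isInterval_of_isInterval_relabel hv⟩

/-- Every IP-SEG graph on `n` vertices has an IP-SEG model whose endpoint
`x`-coordinates lie in `{1, …, 2n}` and in which no two segments of distinct
vertices share an endpoint; moreover, every IP-SEG* graph has such a model
that is additionally an IP-SEG* model. -/
theorem exists_nice_model {V : Type} [Fintype V] (G : SimpleGraph V) :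
    ((∃ s : V → IPSeg, IsIPSEGModel G s) →
      ∃ s : V → IPSeg, IsIPSEGModel G s ∧ NiceModel s) ∧
    ((∃ s : V → IPSeg, IsIPSEGStarModel G s) →
      ∃ s : V → IPSeg, IsIPSEGStarModel G s ∧ NiceModel s) := by
  have transfer {s t : V → IPSeg} (hs : IsIPSEGModel G s)
      (hst : ∀ u v, u ≠ v → (((t u).carrier ∩ (t v).carrier).Nonempty ↔
        ((s u).carrier ∩ (s v).carrier).Nonempty)) : IsIPSEGModel G t :=
    fun u v huv => (hs u v huv).trans (hst u v huv).symm
  refine ⟨fun ⟨s, hs⟩ => ?_, fun ⟨s, hs, c, hc, hline⟩ => ?_⟩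
  · obtain ⟨t, hnice, hst, -⟩ := exists_nice_relabel s
    exact ⟨t, transfer hs hst, hnice⟩
  · obtain ⟨t, hnice, hst, hint⟩ := exists_nice_relabel s
    refine ⟨t, ⟨transfer hs hst, c, hc, fun v hv => ?_⟩, hnice⟩
    obtain ⟨hsv, hp⟩ := hint v hv
    exact hp.trans (hline v hsv)
end

section
/- For every n ≥ 1, the number of graphs on the labeled vertex set {1, …, n} that are IP-SEG graphs is at most (2n)^(4n). (Hence the classes of IP-SEG and IP-SEG* graphs contain at most 2^{O(n log n)} labeled graphs on n vertices.) -/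
/-!
Replacing every x-coordinate by its rank among the at most `2n` endpoint x-coordinates of a
model preserves which segments meet: after orienting every segment upwards, two segments meet
iff certain comparisons between their endpoint x-coordinates hold (overlapping intervals on a
common line, an endpoint of a permutation segment inside an interval segment, or permutation
segments whose endpoints are in opposite order on the two lines). Hence every IP-SEG graph on
`n` vertices is the intersection graph of segments coded by a rank in `Fin (2n)` and a line in
`Fin 2` for each endpoint, and there are `(4n)^(2n) ≤ (2n)^(4n)` such codings.
-/

open Set
open scoped Finset

theorem segment_eq_uIcc_prod_singleton (a b y : ℝ) :
    segment ℝ (a, y) (b, y) = uIcc a b ×ˢ {y} := by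
  rw [← Prod.image_mk_segment_left, segment_eq_uIcc, prod_singleton]

theorem horizontal_inter_horizontal_nonempty_iff (a b c d y z : ℝ) :
    (segment ℝ (a, y) (b, y) ∩ segment ℝ (c, z) (d, z)).Nonempty ↔
      y = z ∧ (uIcc a b ∩ uIcc c d).Nonempty := by
  simp only [segment_eq_uIcc_prod_singleton, prod_inter_prod, prod_nonempty_iff,
    singleton_inter_nonempty, mem_singleton_iff]
  exact and_comm

theorem horizontal_inter_crossing_nonempty_iff {a b c d y z : ℝ} (hyz : y ≠ z) :
    (segment ℝ (a, y) (b, y) ∩ segment ℝ (c, y) (d, z)).Nonempty ↔ c ∈ uIcc a b := by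
  rw [segment_eq_uIcc_prod_singleton, segment_eq_image']
  constructor
  · rintro ⟨_, ⟨hx, hy⟩, t, ht, rfl⟩
    simp only [Prod.fst_add, Prod.snd_add, Prod.smul_fst, Prod.smul_snd, Prod.fst_sub,
      Prod.snd_sub, smul_eq_mul, mem_singleton_iff, add_eq_left, mul_eq_zero,
      sub_eq_zero] at hx hy
    simpa [hy.resolve_right (Ne.symm hyz)] using hx
  · intro hc
    exact ⟨(c, y), ⟨hc, rfl⟩, 0, ⟨le_rfl, zero_le_one⟩, by simp⟩

theorem crossing_inter_crossing_nonempty_iff {a b c d y z : ℝ} (hyz : y ≠ z) :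
    (segment ℝ (a, y) (b, z) ∩ segment ℝ (c, y) (d, z)).Nonempty ↔
      a ≤ c ∧ d ≤ b ∨ b ≤ d ∧ c ≤ a := by
  have : (segment ℝ (a, y) (b, z) ∩ segment ℝ (c, y) (d, z)).Nonempty ↔
      (0 : ℝ) ∈ segment ℝ (a - c) (b - d) := by
    simp only [segment_eq_image', Set.Nonempty, mem_inter_iff, mem_image]
    constructor
    · rintro ⟨_, ⟨t, ht, rfl⟩, u, hu, h⟩
      simp only [Prod.ext_iff, Prod.fst_add, Prod.snd_add, Prod.smul_fst, Prod.smul_snd,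
        Prod.fst_sub, Prod.snd_sub, smul_eq_mul] at h
      obtain rfl : u = t := mul_right_cancel₀ (sub_ne_zero.mpr hyz.symm) (by linarith [h.2])
      exact ⟨u, hu, by simp only [smul_eq_mul]; linarith [h.1]⟩
    · rintro ⟨t, ht, h⟩
      refine ⟨_, ⟨t, ht, rfl⟩, t, ht, ?_⟩
      simp only [smul_eq_mul] at h
      ext <;> simp only [Prod.fst_add, Prod.snd_add, Prod.smul_fst, Prod.smul_snd,
        Prod.fst_sub, Prod.snd_sub, smul_eq_mul]
      linarith
  rw [this, segment_eq_uIcc, mem_uIcc]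
  simp only [sub_nonpos, sub_nonneg]

namespace StrictMonoOn

variable {f : ℝ → ℝ} {S : Set ℝ} {a b c d : ℝ}

theorem mem_uIcc_iff (hf : StrictMonoOn f S) (ha : a ∈ S) (hb : b ∈ S) (hc : c ∈ S) :
    f c ∈ uIcc (f a) (f b) ↔ c ∈ uIcc a b := by
  simp only [mem_uIcc, hf.le_iff_le, ha, hb, hc]

theorem uIcc_inter_uIcc_nonempty_iff (hf : StrictMonoOn f S) (ha : a ∈ S) (hb : b ∈ S)
    (hc : c ∈ S) (hd : d ∈ S) :
    (uIcc (f a) (f b) ∩ uIcc (f c) (f d)).Nonempty ↔ (uIcc a b ∩ uIcc c d).Nonempty := by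
  simp only [uIcc, Icc_inter_Icc, nonempty_Icc, max_le_iff, le_min_iff, min_le_iff,
    le_max_iff, hf.le_iff_le, ha, hb, hc, hd]

end StrictMonoOn

namespace IPSeg

theorem ext {s t : IPSeg} (hp : s.p = t.p) (hq : s.q = t.q) : s = t := by
  cases s; cases t; cases hp; cases hq; rfl

def reverse (s : IPSeg) : IPSeg := ⟨s.q, s.p, s.hq, s.hp⟩

theorem carrier_reverse (s : IPSeg) : s.reverse.carrier = s.carrier :=
  segment_symm ℝ s.q s.p

def mapX (f : ℝ → ℝ) (s : IPSeg) : IPSeg := ⟨(f s.p.1, s.p.2), (f s.q.1, s.q.2), s.hp, s.hq⟩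

theorem mapX_reverse (f : ℝ → ℝ) (s : IPSeg) : (s.mapX f).reverse = s.reverse.mapX f := rfl

theorem inter_mapX_nonempty_iff {f : ℝ → ℝ} {S : Set ℝ} (hf : StrictMonoOn f S) {s t : IPSeg}
    (hs : s.p.1 ∈ S ∧ s.q.1 ∈ S) (ht : t.p.1 ∈ S ∧ t.q.1 ∈ S) :
    ((s.mapX f).carrier ∩ (t.mapX f).carrier).Nonempty ↔ (s.carrier ∩ t.carrier).Nonempty := by
  wlog hs₂ : s.p.2 ≤ s.q.2 generalizing s
  · simpa only [← mapX_reverse, carrier_reverse] using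
      this (s := s.reverse) hs.symm (le_of_not_ge hs₂)
  wlog ht₂ : t.p.2 ≤ t.q.2 generalizing t
  · simpa only [← mapX_reverse, carrier_reverse] using
      this (t := t.reverse) ht.symm (le_of_not_ge ht₂)
  wlog hst : s.IsPermutation → t.IsPermutation generalizing s t
  · rw [inter_comm, inter_comm s.carrier]
    exact this (hs := ht) (ht := hs) (hs₂ := ht₂) (ht₂ := hs₂)
      fun _ => (Classical.not_imp.mp hst).1
  have crossing {y₁ y₂ : ℝ} (h₁ : y₁ = 1 ∨ y₁ = 2) (h₂ : y₂ = 1 ∨ y₂ = 2) (hle : y₁ ≤ y₂)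
      (hne : y₁ ≠ y₂) : y₁ = 1 ∧ y₂ = 2 := by
    rcases h₁ with rfl | rfl <;> rcases h₂ with rfl | rfl <;> norm_num at *
  obtain ⟨⟨a, y₁⟩, ⟨b, y₂⟩, hy₁, hy₂⟩ := s
  obtain ⟨⟨c, z₁⟩, ⟨d, z₂⟩, hz₁, hz₂⟩ := t
  obtain ⟨ha, hb⟩ := hs
  obtain ⟨hc, hd⟩ := ht
  simp only [IsPermutation, carrier, mapX] at ha hb hc hd hs₂ ht₂ hst ⊢
  have h12 : (1 : ℝ) ≠ 2 := by norm_num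
  by_cases hy : y₁ = y₂
  · subst hy
    by_cases hz : z₁ = z₂
    · subst hz
      rw [horizontal_inter_horizontal_nonempty_iff, horizontal_inter_horizontal_nonempty_iff,
        hf.uIcc_inter_uIcc_nonempty_iff ha hb hc hd]
    obtain ⟨rfl, rfl⟩ := crossing hz₁ hz₂ ht₂ hz
    rcases hy₁ with rfl | rfl
    · rw [horizontal_inter_crossing_nonempty_iff h12, horizontal_inter_crossing_nonempty_iff h12,
        hf.mem_uIcc_iff ha hb hc]
    · rw [segment_symm ℝ (f c, 1), segment_symm ℝ (c, 1),
        horizontal_inter_crossing_nonempty_iff h12.symm,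
        horizontal_inter_crossing_nonempty_iff h12.symm, hf.mem_uIcc_iff ha hb hd]
  obtain ⟨rfl, rfl⟩ := crossing hy₁ hy₂ hs₂ hy
  obtain ⟨rfl, rfl⟩ := crossing hz₁ hz₂ ht₂ (hst hy)
  rw [crossing_inter_crossing_nonempty_iff h12, crossing_inter_crossing_nonempty_iff h12]
  simp only [hf.le_iff_le, ha, hb, hc, hd]

end IPSeg

theorem IsIPSEGModel.mapX {V : Type*} {G : SimpleGraph V} {s : V → IPSeg} (h : IsIPSEGModel G s)
    {f : ℝ → ℝ} {S : Set ℝ} (hf : StrictMonoOn f S) (hS : ∀ v, (s v).p.1 ∈ S ∧ (s v).q.1 ∈ S) :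
    IsIPSEGModel G fun v => (s v).mapX f := fun u v huv =>
  (h u v huv).trans (IPSeg.inter_mapX_nonempty_iff hf (hS u) (hS v)).symm

noncomputable def rankIn (X : Finset ℝ) (x : ℝ) : ℕ := #{y ∈ X | y < x}

theorem rankIn_lt_card {X : Finset ℝ} {x : ℝ} (hx : x ∈ X) : rankIn X x < #X :=
  Finset.card_lt_card <| Finset.filter_ssubset.mpr ⟨x, hx, lt_irrefl x⟩

theorem strictMonoOn_rankIn (X : Finset ℝ) : StrictMonoOn (fun x => (rankIn X x : ℝ)) X := by
  intro x hx y hy hxy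
  refine Nat.cast_lt.mpr
    (Finset.card_lt_card (s := {z ∈ X | z < x}) (t := {z ∈ X | z < y}) ⟨?_, fun h => ?_⟩)
  · exact Finset.monotone_filter_right X fun _ _ hz => hz.trans hxy
  · exact lt_irrefl x (Finset.mem_filter.mp (h (Finset.mem_filter.mpr ⟨hx, hxy⟩))).2

abbrev SegCode (m : ℕ) : Type := (Fin m × Fin 2) × (Fin m × Fin 2)

theorem Fin.cast_add_one_eq_one_or_two (i : Fin 2) :
    ((i : ℕ) : ℝ) + 1 = 1 ∨ ((i : ℕ) : ℝ) + 1 = 2 := by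
  fin_cases i <;> norm_num

def IPSeg.ofCode {m : ℕ} (c : SegCode m) : IPSeg :=
  ⟨((c.1.1 : ℕ), (c.1.2 : ℕ) + 1), ((c.2.1 : ℕ), (c.2.2 : ℕ) + 1),
    Fin.cast_add_one_eq_one_or_two c.1.2, Fin.cast_add_one_eq_one_or_two c.2.2⟩

noncomputable def lineIndex (y : ℝ) : Fin 2 := if y = 1 then 0 else 1

theorem lineIndex_cast_add_one {y : ℝ} (hy : y = 1 ∨ y = 2) :
    ((lineIndex y : ℕ) : ℝ) + 1 = y := by
  rcases hy with rfl | rfl <;> norm_num [lineIndex]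

theorem IsIPSEGModel.exists_ofCode {V : Type*} [Fintype V] {G : SimpleGraph V} {s : V → IPSeg}
    (h : IsIPSEGModel G s) :
    ∃ c : V → SegCode (2 * Fintype.card V), IsIPSEGModel G fun v => IPSeg.ofCode (c v) := by
  classical
  set X : Finset ℝ :=
    Finset.univ.image (fun v => (s v).p.1) ∪ Finset.univ.image (fun v => (s v).q.1)
  have hX : #X ≤ 2 * Fintype.card V :=
    (Finset.card_union_le _ _).trans <| by
      rw [two_mul]; exact add_le_add Finset.card_image_le Finset.card_image_le
  have hp (v : V) : (s v).p.1 ∈ X :=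
    Finset.mem_union_left _ (Finset.mem_image_of_mem _ (Finset.mem_univ v))
  have hq (v : V) : (s v).q.1 ∈ X :=
    Finset.mem_union_right _ (Finset.mem_image_of_mem _ (Finset.mem_univ v))
  let code (z : ℝ × ℝ) (hz : z.1 ∈ X) : Fin (2 * Fintype.card V) × Fin 2 :=
    (⟨rankIn X z.1, (rankIn_lt_card hz).trans_le hX⟩, lineIndex z.2)
  refine ⟨fun v => (code (s v).p (hp v), code (s v).q (hq v)), ?_⟩
  convert h.mapX (strictMonoOn_rankIn X) (fun v => ⟨hp v, hq v⟩) using 2 with v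
  exact IPSeg.ext (Prod.ext rfl (lineIndex_cast_add_one (s v).hp))
    (Prod.ext rfl (lineIndex_cast_add_one (s v).hq))

def intersectionGraph {V : Type*} (s : V → IPSeg) : SimpleGraph V :=
  SimpleGraph.fromRel fun u v => ((s u).carrier ∩ (s v).carrier).Nonempty

theorem IsIPSEGModel.eq_intersectionGraph {V : Type*} {G : SimpleGraph V} {s : V → IPSeg}
    (h : IsIPSEGModel G s) : G = intersectionGraph s := by
  ext u v
  simp only [intersectionGraph, SimpleGraph.fromRel_adj, inter_comm (s v).carrier, or_self]
  exact ⟨fun huv => ⟨G.ne_of_adj huv, (h u v (G.ne_of_adj huv)).mp huv⟩,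
    fun ⟨huv, hi⟩ => (h u v huv).mpr hi⟩

theorem card_IPSEG_graphs_le_general (n : ℕ) :
    {G : SimpleGraph (Fin n) | ∃ s : Fin n → IPSeg, IsIPSEGModel G s}.ncard ≤
      (2 * n) ^ (4 * n) := by
  have hsub : {G : SimpleGraph (Fin n) | ∃ s : Fin n → IPSeg, IsIPSEGModel G s} ⊆
      range fun c : Fin n → SegCode (2 * Fintype.card (Fin n)) =>
        intersectionGraph fun v => IPSeg.ofCode (c v) := by
    rintro G ⟨s, hs⟩
    obtain ⟨c, hc⟩ := hs.exists_ofCode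
    exact ⟨c, hc.eq_intersectionGraph.symm⟩
  calc _ ≤ (range _).ncard := ncard_le_ncard hsub (finite_range _)
    _ ≤ Nat.card (Fin n → SegCode (2 * Fintype.card (Fin n))) := by
      rw [← Nat.card_coe_set_eq]
      exact Finite.card_range_le _
    _ = (16 * n ^ 2) ^ n := by
      simp only [Nat.card_eq_fintype_card, Fintype.card_fun, Fintype.card_prod, Fintype.card_fin]
      ring
    _ ≤ (16 * (n ^ 2) ^ 2) ^ n := by gcongr; exact Nat.le_self_pow two_ne_zero _
    _ = (2 * n) ^ (4 * n) := by rw [pow_mul]; ring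

/-- For every `n ≥ 1`, the number of labeled graphs on vertex set `{1, …, n}`
that are IP-SEG graphs is at most `(2n)^(4n)`. -/
theorem card_IPSEG_graphs_le (n : ℕ) (hn : 1 ≤ n) :
    {G : SimpleGraph (Fin n) | ∃ s : Fin n → IPSeg, IsIPSEGModel G s}.ncard ≤
      (2 * n) ^ (4 * n) :=
  card_IPSEG_graphs_le_general n
end

section
/- Let n ≥ 2 and let the path P_n on vertices v₁, …, vₙ (edges exactly vᵢv_{i+1} for 1 ≤ i ≤ n−1) have an IP-SEG model consisting only of interval segments, all lying on one horizontal line, where segment s(vᵢ) corresponds to the real interval [aᵢ, bᵢ]. Suppose no segment of the model is contained in another, and suppose a₁ is the minimum of a₁, …, aₙ. Then a₁ < a₂ < ⋯ < aₙ and b₁ < b₂ < ⋯ < bₙ; i.e., in an active interval representation of a path, the left-to-right order of the left endpoints and of the right endpoints each coincide with the path order. -/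
/-!
Since no interval contains another, distinct intervals have distinct left endpoints, and the
order of the left endpoints determines that of the right endpoints. For three consecutive
vertices `u, v, w` with `a u ≤ a v`, the point `a v` lies in `[a u, b u]` and, were
`a w ≤ a v`, also in `[a w, b w]`; as `u` and `w` are not adjacent, `a v < a w`. Starting from
`a v₁ < a v₂`, this propagates along the path.
-/

open Set

section IntervalOrder

variable {α : Type*} [LinearOrder α] {a₁ b₁ a₂ b₂ a₃ b₃ : α}

theorem lt_right_of_lt_left_of_not_Icc_subset (ha : a₁ < a₂)
    (h : ¬ Icc a₂ b₂ ⊆ Icc a₁ b₁) : b₁ < b₂ :=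
  lt_of_not_ge fun hb => h (Icc_subset_Icc ha.le hb)

theorem left_ne_of_not_Icc_subset (h₁₂ : ¬ Icc a₁ b₁ ⊆ Icc a₂ b₂)
    (h₂₁ : ¬ Icc a₂ b₂ ⊆ Icc a₁ b₁) : a₁ ≠ a₂ := by
  rintro rfl
  rcases le_total b₁ b₂ with hb | hb
  · exact h₁₂ (Icc_subset_Icc le_rfl hb)
  · exact h₂₁ (Icc_subset_Icc le_rfl hb)

theorem left_lt_of_Icc_chain (ha : a₁ ≤ a₂)
    (h₁₂ : (Icc a₁ b₁ ∩ Icc a₂ b₂).Nonempty) (h₂₃ : (Icc a₂ b₂ ∩ Icc a₃ b₃).Nonempty)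
    (h₁₃ : ¬ (Icc a₁ b₁ ∩ Icc a₃ b₃).Nonempty) : a₂ < a₃ := by
  obtain ⟨x, ⟨-, hxb₁⟩, hax, -⟩ := h₁₂
  obtain ⟨y, ⟨hay, -⟩, -, hyb₃⟩ := h₂₃
  by_contra! ha₃
  exact h₁₃ ⟨a₂, ⟨ha, hax.trans hxb₁⟩, ha₃, hay.trans hyb₃⟩

theorem strictMono_left_of_Icc_path {m : ℕ} {a b : Fin (m + 2) → α} (h₀₁ : a 0 < a 1)
    (hadj : ∀ i : Fin (m + 1),
      (Icc (a i.castSucc) (b i.castSucc) ∩ Icc (a i.succ) (b i.succ)).Nonempty)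
    (hfar : ∀ i : Fin m,
      ¬ (Icc (a i.castSucc.castSucc) (b i.castSucc.castSucc) ∩
          Icc (a i.succ.succ) (b i.succ.succ)).Nonempty) :
    StrictMono a := by
  refine Fin.strictMono_iff_lt_succ.2 fun i => ?_
  induction i using Fin.induction with
  | zero => exact h₀₁
  | succ i ih =>
    have h₂₃ := hadj i.succ
    rw [← Fin.succ_castSucc] at h₂₃ ⊢
    exact left_lt_of_Icc_chain ih.le (hadj i.castSucc) h₂₃ (hfar i)

end IntervalOrder

/-- In an active interval representation of the path `P_n` (an intersection model of
the path by closed real intervals `[a i, b i]`, all on one line, with no interval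
contained in another), if the first vertex has the leftmost left endpoint, then both
the left endpoints and the right endpoints appear in path order. -/
theorem active_interval_representation_of_path (n : ℕ) (hn : 2 ≤ n)
    (a b : Fin n → ℝ)
    (hmodel : ∀ i j : Fin n, i ≠ j →
      (((i : ℕ) + 1 = (j : ℕ) ∨ (j : ℕ) + 1 = (i : ℕ)) ↔
        (Set.Icc (a i) (b i) ∩ Set.Icc (a j) (b j)).Nonempty))
    (hnocont : ∀ i j : Fin n, i ≠ j → ¬ Set.Icc (a i) (b i) ⊆ Set.Icc (a j) (b j))
    (hmin : ∀ i : Fin n, a ⟨0, by omega⟩ ≤ a i) :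
    StrictMono a ∧ StrictMono b := by
  obtain ⟨m, rfl⟩ : ∃ m, n = m + 2 := ⟨n - 2, by omega⟩
  have h₀₁ : a 0 < a 1 :=
    (hmin 1).lt_of_ne <|
      left_ne_of_not_Icc_subset (hnocont 0 1 zero_ne_one) (hnocont 1 0 one_ne_zero)
  have ha : StrictMono a := by
    refine strictMono_left_of_Icc_path (b := b) h₀₁ (fun i => ?_) (fun i => ?_)
    · exact (hmodel _ _ Fin.castSucc_lt_succ.ne).1 (Or.inl rfl)
    · rw [← hmodel _ _ (Fin.ne_of_lt (by simp [Fin.lt_def]))]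
      simp only [Fin.val_castSucc, Fin.val_succ]
      omega
  exact ⟨ha, fun i j hij => lt_right_of_lt_left_of_not_Icc_subset (ha hij) (hnocont j i hij.ne')⟩
end

section
/- Let n ≥ 4. Every IP-SEG* model of the chordless cycle C_n that contains at least one interval segment has exactly one interval arc (and hence exactly one permutation arc). -/
/-- The chordless cycle `C_n` on vertex set `ZMod n`, with edges exactly
`v — v + 1` (indices modulo `n`). -/
def CycleGraph (n : ℕ) : SimpleGraph (ZMod n) :=
  SimpleGraph.fromRel (fun u v => v = u + 1)

/-- `v` is the start of an interval arc: `v` is assigned an interval segment but its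
cyclic predecessor is not. -/
def IntArcStart (n : ℕ) (s : ZMod n → IPSeg) (v : ZMod n) : Prop :=
  (s v).IsInterval ∧ ¬ (s (v - 1)).IsInterval

/-- The interval arc starting at `v` has length `l`: the `l` consecutive vertices
`v, v+1, …, v+l-1` carry interval segments and `v + l` does not. -/
def IntArcLen (n : ℕ) (s : ZMod n → IPSeg) (v : ZMod n) (l : ℕ) : Prop :=
  (∀ k : ℕ, k < l → (s (v + (k : ZMod n))).IsInterval) ∧
    ¬ (s (v + (l : ZMod n))).IsInterval

/-- `v` is the start of a permutation arc. -/
def PermArcStart (n : ℕ) (s : ZMod n → IPSeg) (v : ZMod n) : Prop :=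
  (s v).IsPermutation ∧ ¬ (s (v - 1)).IsPermutation

/-- The permutation arc starting at `v` has length `l`. -/
def PermArcLen (n : ℕ) (s : ZMod n → IPSeg) (v : ZMod n) (l : ℕ) : Prop :=
  (∀ k : ℕ, k < l → (s (v + (k : ZMod n))).IsPermutation) ∧
    ¬ (s (v + (l : ZMod n))).IsPermutation

/-!
Let all interval segments lie on `L_c`. Two of them meet iff their shadows on the `x`-axis
meet; an interval segment meets a permutation segment iff its shadow contains the foot of the
latter on `L_c`; two permutation segments meet iff their feet on `L₁` and on `L₂` come in
opposite orders.

The cycle `C_n` (`n ≥ 4`) is not an interval graph, so some segment is a permutation segment.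
Suppose there were two interval arcs. Let `w` be a permutation segment whose foot on `L_c` is
rightmost, `M` its permutation arc, `A` and `B` the interval arcs around `M` and `l`, `r` the
permutation segments just beyond `A` and `B`. The segments of `M` form a crossing chain that
misses `l` and `r`, so all of `M` lies strictly to the right of `l` and of `r`. The union of the
shadows of `A` is an interval from the foot of `l` to the foot of the first segment of `M`, and
likewise for `B`, so both contain the smaller foot `μ` of the two end segments of `M`: a segment
of `A` meets a segment of `B`, although they are not adjacent. Permutation arcs and interval arcs
alternate, so there is also just one permutation arc.
-/

open Set

theorem zero_mem_uIcc_iff {a b : ℝ} : (0 : ℝ) ∈ uIcc a b ↔ a * b ≤ 0 := by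
  rw [mem_uIcc, mul_nonpos_iff]
  tauto

theorem lt_iff_lt_of_mul_pos_of_mul_nonpos {b₁ t₁ b₂ t₂ B T : ℝ}
    (h₁ : 0 < (b₁ - B) * (t₁ - T)) (h₂ : 0 < (b₂ - B) * (t₂ - T))
    (h : (b₁ - b₂) * (t₁ - t₂) ≤ 0) : B < b₁ ↔ B < b₂ := by
  rcases pos_and_pos_or_neg_and_neg_of_mul_pos h₁ with ⟨hb₁, ht₁⟩ | ⟨hb₁, ht₁⟩ <;>
  rcases pos_and_pos_or_neg_and_neg_of_mul_pos h₂ with ⟨hb₂, ht₂⟩ | ⟨hb₂, ht₂⟩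
  · exact ⟨fun _ => by linarith, fun _ => by linarith⟩
  · exact absurd h (not_le.mpr (mul_pos (by linarith) (by linarith)))
  · exact absurd h (not_le.mpr (mul_pos_of_neg_of_neg (by linarith) (by linarith)))
  · exact ⟨fun _ => by linarith, fun _ => by linarith⟩

theorem exists_uIcc_pred_inter_uIcc_succ_nonempty {n : ℕ} [NeZero n] (e f : ZMod n → ℝ)
    (h : ∀ x, (uIcc (e x) (f x) ∩ uIcc (e (x + 1)) (f (x + 1))).Nonempty) :
    ∃ x, (uIcc (e (x - 1)) (f (x - 1)) ∩ uIcc (e (x + 1)) (f (x + 1))).Nonempty := by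
  -- the interval with the leftmost right end point `r` meets both neighbours at `r`
  obtain ⟨x, -, hx⟩ :=
    Finset.exists_min_image Finset.univ (fun x => e x ⊔ f x) Finset.univ_nonempty
  have hr : ∀ y, (uIcc (e x) (f x) ∩ uIcc (e y) (f y)).Nonempty →
      e x ⊔ f x ∈ uIcc (e y) (f y) :=
    fun y ⟨_, hz, hz'⟩ => ⟨hz'.1.trans hz.2, hx y (Finset.mem_univ y)⟩
  refine ⟨x, e x ⊔ f x, hr _ ?_, hr _ (h x)⟩
  simpa [inter_comm] using h (x - 1)

theorem iff_of_forall_iff_succ {P : ℤ → Prop} {a b : ℤ}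
    (h : ∀ i, a ≤ i → i < b → (P i ↔ P (i + 1))) :
    ∀ i, a ≤ i → i ≤ b → (P a ↔ P i) := by
  intro i hai
  induction i, hai using Int.leInduction with
  | base => exact fun _ => Iff.rfl
  | succ i hai ih => exact fun hib => (ih (by omega)).trans (h i hai (by omega))

theorem exists_run_end {R : ℤ → Prop} {a b : ℤ} (hab : a ≤ b) (ha : R a) (hb : ¬ R b) :
    ∃ k, a < k ∧ k ≤ b ∧ (∀ i, a ≤ i → i < k → R i) ∧ ¬ R k := by
  obtain ⟨k, ⟨hak, hk⟩, hmin⟩ := Int.exists_least_of_bdd (P := fun k => a ≤ k ∧ ¬ R k)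
    ⟨a, fun _ h => h.1⟩ ⟨b, hab, hb⟩
  refine ⟨k, lt_of_le_of_ne hak (by rintro rfl; exact hk ha), hmin b ⟨hab, hb⟩,
    fun i hai hik => ?_, hk⟩
  by_contra hi
  exact absurd (hmin i ⟨hai, hi⟩) (not_le.mpr hik)

section ZMod

variable {n : ℕ}

theorem intCast_ne_zero_of_pos_of_lt {k : ℤ} (h₀ : 0 < k) (hk : k < n) :
    (k : ZMod n) ≠ 0 := by
  rw [Ne, ZMod.intCast_zmod_eq_zero_iff_dvd]
  exact fun hd => absurd (Int.le_of_dvd h₀ hd) (by omega)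

theorem exists_intCast_add_eq_of_ne [NeZero n] {u u' : ZMod n} (hne : u ≠ u') :
    ∃ q : ℤ, 0 < q ∧ q < n ∧ u + q = u' := by
  have : (u' - u).val ≠ 0 := by rw [Ne, ZMod.val_eq_zero, sub_eq_zero]; exact hne.symm
  exact ⟨(u' - u).val, by omega, by exact_mod_cast ZMod.val_lt (u' - u), by simp⟩

theorem exists_and_not_sub_one [NeZero n] (P : ZMod n → Prop) {x y : ZMod n} (hx : ¬ P x)
    (hy : P y) : ∃ v, P v ∧ ¬ P (v - 1) := by
  obtain ⟨k, hk₀, -, hrun, hk⟩ := exists_run_end (R := fun k : ℤ => ¬ P (x + k))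
    (Int.natCast_nonneg (y - x).val) (by simpa using hx) (by simpa using hy)
  exact ⟨x + k, not_not.mp hk,
    by simpa [add_sub_assoc] using hrun (k - 1) (by omega) (by omega)⟩

theorem exists_two_starts_compl [NeZero n] (P : ZMod n → Prop) {u u' : ZMod n}
    (hu : P u ∧ ¬ P (u - 1)) (hu' : P u' ∧ ¬ P (u' - 1)) (hne : u ≠ u') :
    ∃ v v', v ≠ v' ∧ (¬ P v ∧ P (v - 1)) ∧ (¬ P v' ∧ P (v' - 1)) := by
  obtain ⟨q, hq₀, hqn, hq⟩ := exists_intCast_add_eq_of_ne hne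
  obtain ⟨k, hk₀, hkq, hrun, hk⟩ := exists_run_end (R := fun k : ℤ => P (u + k))
    (by omega : (0 : ℤ) ≤ q - 1) (by simpa using hu.1)
    (by simpa [← hq, add_sub_assoc] using hu'.2)
  obtain ⟨k', hqk', hk'n, hrun', hk'⟩ := exists_run_end (R := fun k : ℤ => P (u + k))
    (by omega : q ≤ n - 1) (by simpa [hq] using hu'.1) (by simpa [sub_eq_add_neg] using hu.2)
  refine ⟨u + k, u + k', fun h => intCast_ne_zero_of_pos_of_lt (n := n) (k := k' - k)
    (by omega) (by omega) (by push_cast; linear_combination -h), ⟨hk, ?_⟩, ⟨hk', ?_⟩⟩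
  · simpa [add_sub_assoc] using hrun (k - 1) (by omega) (by omega)
  · simpa [add_sub_assoc] using hrun' (k' - 1) (by omega) (by omega)

theorem cycleGraph_adj_add_one (hn : 2 ≤ n) (x : ZMod n) : (CycleGraph n).Adj x (x + 1) := by
  refine (SimpleGraph.fromRel_adj _ _ _).mpr ⟨fun h => ?_, Or.inl rfl⟩
  exact intCast_ne_zero_of_pos_of_lt (n := n) one_pos (by omega)
    (by push_cast; linear_combination -h)

theorem cycleGraph_not_adj_add_intCast (x : ZMod n) {i j : ℤ} (h₁ : i + 2 ≤ j)
    (h₂ : j + 2 ≤ i + n) : x + i ≠ x + j ∧ ¬ (CycleGraph n).Adj (x + i) (x + j) := by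
  have hne : ∀ k : ℤ, 0 < k → k < n → (k : ZMod n) ≠ 0 :=
    fun k => intCast_ne_zero_of_pos_of_lt
  refine ⟨fun h => hne (j - i) (by omega) (by omega) (by push_cast; linear_combination -h), ?_⟩
  rintro ⟨-, h | h⟩
  · exact hne (j - i - 1) (by omega) (by omega) (by push_cast; linear_combination h)
  · exact hne (j - i + 1) (by omega) (by omega) (by push_cast; linear_combination -h)

end ZMod

namespace IPSeg

def Meets (u v : IPSeg) : Prop := (u.carrier ∩ v.carrier).Nonempty

theorem Meets.symm {u v : IPSeg} (h : u.Meets v) : v.Meets u := by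
  rwa [Meets, inter_comm]

@[simp]
theorem not_isInterval {u : IPSeg} : ¬ u.IsInterval ↔ u.IsPermutation := Iff.rfl

@[simp]
theorem not_isPermutation {u : IPSeg} : ¬ u.IsPermutation ↔ u.IsInterval := not_not

/-- The abscissa of the endpoint of `u` on the line `y = t`; for a permutation segment and
`t ∈ {1, 2}` this is its foot on `Lₜ`. -/
noncomputable def xAt (u : IPSeg) (t : ℝ) : ℝ := if u.p.2 = t then u.p.1 else u.q.1

def shadow (u : IPSeg) : Set ℝ := uIcc u.p.1 u.q.1

theorem carrier_eq_image_shadow {u : IPSeg} {c : ℝ} (hI : u.IsInterval) (hc : u.p.2 = c) :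
    u.carrier = (fun x => (x, c)) '' u.shadow := by
  have hq : u.q.2 = c := hI ▸ hc
  rw [shadow, ← segment_eq_uIcc, Prod.image_mk_segment_left, carrier]
  congr 1 <;> exact Prod.ext rfl ‹_›

theorem carrier_eq_of_isPermutation {u : IPSeg} (hP : u.IsPermutation) :
    u.carrier = segment ℝ (u.xAt 1, 1) (u.xAt 2, 2) := by
  unfold IsPermutation at hP
  rcases u.hp with hp | hp <;> rcases u.hq with hq | hq
  · exact absurd (hp.trans hq.symm) hP
  · rw [carrier, xAt, xAt, if_pos hp, if_neg (by rw [hp]; norm_num), ← hp, ← hq]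
  · rw [carrier, xAt, xAt, if_neg (by rw [hp]; norm_num), if_pos hp, segment_symm, ← hp, ← hq]
  · exact absurd (hp.trans hq.symm) hP

theorem mem_segment_one_two {β τ : ℝ} {z : ℝ × ℝ} :
    z ∈ segment ℝ ((β, 1) : ℝ × ℝ) (τ, 2) ↔
      ∃ θ ∈ Icc (0 : ℝ) 1, z = ((1 - θ) * β + θ * τ, 1 + θ) := by
  rw [segment_eq_image]
  refine exists_congr fun θ => and_congr Iff.rfl ?_
  rw [eq_comm, Prod.ext_iff, Prod.ext_iff]
  simp only [Prod.smul_mk, Prod.mk_add_mk, smul_eq_mul]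
  constructor <;> rintro ⟨h₁, h₂⟩ <;> exact ⟨by linarith, by linarith⟩

theorem meets_iff_shadow_inter_nonempty {u v : IPSeg} {c : ℝ} (hu : u.IsInterval)
    (hv : v.IsInterval) (huc : u.p.2 = c) (hvc : v.p.2 = c) :
    u.Meets v ↔ (u.shadow ∩ v.shadow).Nonempty := by
  rw [Meets, carrier_eq_image_shadow hu huc, carrier_eq_image_shadow hv hvc,
    ← image_inter (Prod.mk_left_injective c), image_nonempty]

theorem meets_iff_xAt_mem_shadow {u v : IPSeg} {c : ℝ} (hc : c = 1 ∨ c = 2)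
    (hu : u.IsInterval) (huc : u.p.2 = c) (hv : v.IsPermutation) :
    u.Meets v ↔ v.xAt c ∈ u.shadow := by
  rw [Meets, carrier_eq_image_shadow hu huc, carrier_eq_of_isPermutation hv]
  constructor
  · rintro ⟨_, ⟨x, hx, rfl⟩, hz⟩
    obtain ⟨θ, -, hxz⟩ := mem_segment_one_two.mp hz
    simp only [Prod.ext_iff] at hxz
    rcases hc with rfl | rfl
    · obtain rfl : θ = 0 := by linarith
      simpa [hxz.1] using hx
    · obtain rfl : θ = 1 := by linarith
      simpa [hxz.1] using hx
  · intro h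
    refine ⟨_, mem_image_of_mem _ h, mem_segment_one_two.mpr ⟨c - 1, ?_⟩⟩
    rcases hc with rfl | rfl <;> norm_num

theorem meets_iff_of_isPermutation {u v : IPSeg} (hu : u.IsPermutation)
    (hv : v.IsPermutation) : u.Meets v ↔ (u.xAt 1 - v.xAt 1) * (u.xAt 2 - v.xAt 2) ≤ 0 := by
  -- both segments are parametrised by the height, so they meet iff `0` lies between the
  -- differences of their feet
  rw [← zero_mem_uIcc_iff, ← segment_eq_uIcc, segment_eq_image, Meets,
    carrier_eq_of_isPermutation hu, carrier_eq_of_isPermutation hv]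
  constructor
  · rintro ⟨z, hzu, hzv⟩
    obtain ⟨θ, hθ, rfl⟩ := mem_segment_one_two.mp hzu
    obtain ⟨θ', hθ', hz⟩ := mem_segment_one_two.mp hzv
    simp only [Prod.ext_iff] at hz
    obtain rfl : θ = θ' := by linarith
    exact ⟨θ, hθ, by simp only [smul_eq_mul]; linarith [hz.1]⟩
  · rintro ⟨θ, hθ, h⟩
    simp only [smul_eq_mul] at h
    exact ⟨_, mem_segment_one_two.mpr ⟨θ, hθ, rfl⟩,
      mem_segment_one_two.mpr ⟨θ, hθ, Prod.ext (by dsimp only; linarith) rfl⟩⟩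

theorem meets_iff_xAt_sub_mul_nonpos {u v : IPSeg} {c : ℝ} (hc : c = 1 ∨ c = 2)
    (hu : u.IsPermutation) (hv : v.IsPermutation) :
    u.Meets v ↔ (u.xAt c - v.xAt c) * (u.xAt (3 - c) - v.xAt (3 - c)) ≤ 0 := by
  rw [meets_iff_of_isPermutation hu hv]
  rcases hc with rfl | rfl <;> norm_num [mul_comm]

theorem xAt_lt_of_crossing_chain {c : ℝ} (hc : c = 1 ∨ c = 2) {g : ℤ → IPSeg} {e : IPSeg}
    {a b m : ℤ} (he : e.IsPermutation) (hP : ∀ i, a ≤ i → i ≤ b → (g i).IsPermutation)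
    (hnext : ∀ i, a ≤ i → i < b → (g i).Meets (g (i + 1)))
    (hsep : ∀ i, a ≤ i → i ≤ b → ¬ (g i).Meets e)
    (ham : a ≤ m) (hmb : m ≤ b) (hle : e.xAt c ≤ (g m).xAt c) :
    ∀ i, a ≤ i → i ≤ b → e.xAt c < (g i).xAt c := by
  have hpos : ∀ i, a ≤ i → i ≤ b →
      0 < ((g i).xAt c - e.xAt c) * ((g i).xAt (3 - c) - e.xAt (3 - c)) := fun i h₁ h₂ =>
    not_le.mp fun h =>
      hsep i h₁ h₂ ((meets_iff_xAt_sub_mul_nonpos hc (hP i h₁ h₂) he).mpr h)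
  have hside := iff_of_forall_iff_succ (P := fun i => e.xAt c < (g i).xAt c) fun i h₁ h₂ =>
    lt_iff_lt_of_mul_pos_of_mul_nonpos (hpos i h₁ h₂.le) (hpos (i + 1) (by omega) h₂)
      ((meets_iff_xAt_sub_mul_nonpos hc (hP i h₁ h₂.le) (hP (i + 1) (by omega) h₂)).mp
        (hnext i h₁ h₂))
  have hm : e.xAt c < (g m).xAt c :=
    hle.lt_of_ne fun h => (hpos m ham hmb).ne' (by rw [h, sub_self, zero_mul])
  exact fun i h₁ h₂ => (hside i h₁ h₂).mp ((hside m ham hmb).mpr hm)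

theorem exists_mem_shadow_of_chain {c : ℝ} {g : ℤ → IPSeg} {a b : ℤ} (hab : a ≤ b)
    (hI : ∀ i, a ≤ i → i ≤ b → (g i).IsInterval)
    (hline : ∀ i, (g i).IsInterval → (g i).p.2 = c)
    (hnext : ∀ i, a ≤ i → i < b → (g i).Meets (g (i + 1)))
    {x y μ : ℝ} (hx : x ∈ (g a).shadow) (hy : y ∈ (g b).shadow) (hμ : μ ∈ uIcc x y) :
    ∃ i, a ≤ i ∧ i ≤ b ∧ μ ∈ (g i).shadow := by
  have hU : IsPreconnected (⋃ i ∈ Icc a b, (g i).shadow) := by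
    refine IsPreconnected.biUnion_of_chain ordConnected_Icc (fun _ _ => isPreconnected_uIcc) ?_
    rintro i ⟨hai, -⟩ hi'
    rw [Order.succ_eq_add_one, mem_Icc] at *
    have hI₁ := hI i hai (by omega)
    have hI₂ := hI (i + 1) (by omega) hi'.2
    exact (meets_iff_shadow_inter_nonempty hI₁ hI₂ (hline _ hI₁) (hline _ hI₂)).mp
      (hnext i hai (by omega))
  have hμU := (isPreconnected_iff_ordConnected.mp hU).uIcc_subset
    (mem_biUnion (left_mem_Icc.mpr hab) hx) (mem_biUnion (right_mem_Icc.mpr hab) hy) hμ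
  simpa only [mem_iUnion, mem_Icc, exists_prop, and_assoc] using hμU

variable {c : ℝ} {n : ℕ} {f : ℤ → IPSeg}

theorem false_of_interval_runs_around_max (hc : c = 1 ∨ c = 2)
    (hline : ∀ i, (f i).IsInterval → (f i).p.2 = c)
    (hnext : ∀ i, (f i).Meets (f (i + 1)))
    (hfar : ∀ i j : ℤ, i + 2 ≤ j → j + 2 ≤ i + n → ¬ (f i).Meets (f j))
    {l a b r : ℤ} (hla : l < a) (ha : a < 0) (hb : 0 < b) (hbr : b < r) (hrl : r ≤ l + n)
    (hl : (f l).IsPermutation) (hA : ∀ i, l < i → i ≤ a → (f i).IsInterval)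
    (hM : ∀ i, a < i → i < b → (f i).IsPermutation)
    (hB : ∀ i, b ≤ i → i < r → (f i).IsInterval) (hr : (f r).IsPermutation)
    (hl0 : (f l).xAt c ≤ (f 0).xAt c) (hr0 : (f r).xAt c ≤ (f 0).xAt c) : False := by
  have hprev : ∀ i, (f (i - 1)).Meets (f i) := fun i => by simpa using hnext (i - 1)
  have hmem : ∀ {i j}, (f i).IsPermutation → (f j).IsInterval → (f i).Meets (f j) →
      (f i).xAt c ∈ (f j).shadow := fun hi hj h =>
    (meets_iff_xAt_mem_shadow hc hj (hline _ hj) hi).mp h.symm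
  have hside : ∀ e, (f e).IsPermutation → (∀ i, a < i → i < b → ¬ (f i).Meets (f e)) →
      (f e).xAt c ≤ (f 0).xAt c → ∀ i, a < i → i < b → (f e).xAt c < (f i).xAt c :=
    fun e he hsep h0 i h₁ h₂ =>
      xAt_lt_of_crossing_chain hc he (fun i h₁ h₂ => hM i (by omega) (by omega))
        (fun i _ _ => hnext i) (fun i h₁ h₂ => hsep i (by omega) (by omega))
        (by omega : a + 1 ≤ 0) (by omega : 0 ≤ b - 1) h0 i (by omega) (by omega)
  have hlM := hside l hl (fun i h₁ h₂ h => hfar l i (by omega) (by omega) h.symm) hl0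
  have hrM := hside r hr (fun i h₁ h₂ => hfar i r (by omega) (by omega)) hr0
  set μ := min ((f (a + 1)).xAt c) ((f (b - 1)).xAt c)
  obtain ⟨i, hi₁, hi₂, hμi⟩ := exists_mem_shadow_of_chain (g := f) (μ := μ)
    (by omega : l + 1 ≤ a) (fun i h₁ h₂ => hA i (by omega) h₂) hline (fun i _ _ => hnext i)
    (hmem hl (hA _ (by omega) (by omega)) (hnext l))
    (hmem (hM _ (by omega) (by omega)) (hA a hla le_rfl) (hnext a).symm)
    (mem_uIcc.mpr (Or.inl ⟨le_min (hlM _ (by omega) (by omega)).le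
      (hlM _ (by omega) (by omega)).le, min_le_left _ _⟩))
  obtain ⟨j, hj₁, hj₂, hμj⟩ := exists_mem_shadow_of_chain (g := f) (μ := μ)
    (by omega : b ≤ r - 1) (fun j h₁ h₂ => hB j h₁ (by omega)) hline (fun j _ _ => hnext j)
    (hmem (hM _ (by omega) (by omega)) (hB b le_rfl hbr) (hprev b))
    (hmem hr (hB _ (by omega) (by omega)) (hprev r).symm)
    (mem_uIcc.mpr (Or.inr ⟨le_min (hrM _ (by omega) (by omega)).le
      (hrM _ (by omega) (by omega)).le, min_le_right _ _⟩))
  have hIi := hA i (by omega) hi₂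
  have hIj := hB j hj₁ (by omega)
  exact hfar i j (by omega) (by omega) ((meets_iff_shadow_inter_nonempty hIi hIj
    (hline _ hIi) (hline _ hIj)).mpr ⟨μ, hμi, hμj⟩)

theorem false_of_two_interval_runs (hc : c = 1 ∨ c = 2) (hper : ∀ k, f (k + n) = f k)
    (hline : ∀ i, (f i).IsInterval → (f i).p.2 = c)
    (hnext : ∀ i, (f i).Meets (f (i + 1)))
    (hfar : ∀ i j : ℤ, i + 2 ≤ j → j + 2 ≤ i + n → ¬ (f i).Meets (f j))
    (h₀ : (f 0).IsPermutation) (hmax : ∀ k, (f k).IsPermutation → (f k).xAt c ≤ (f 0).xAt c)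
    {p q : ℤ} (hp₀ : 0 < p) (hpq : p < q) (hqn : q < n) (hp : (f p).IsInterval)
    (hq₁ : (f (q - 1)).IsPermutation) (hq : (f q).IsInterval) : False := by
  have hback : ∀ k, f (-k) = f (n - k) := fun k => by rw [← hper (-k), neg_add_eq_sub]
  -- the run of permutation segments around `0` is `(-k₂, k₁)`, followed by the interval runs
  -- `[k₁, k₃)` and `(-k₄, -k₂]`
  obtain ⟨k₁, hk₁₀, hk₁p, hrun₁, hk₁⟩ :=
    exists_run_end (R := fun k => ¬ (f k).IsInterval) hp₀.le h₀ (not_not.mpr hp)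
  obtain ⟨k₃, hk₁₃, hk₃q, hrun₃, hk₃⟩ :=
    exists_run_end (R := fun k => (f k).IsInterval)
      (by omega : k₁ ≤ q - 1) (not_not.mp hk₁) hq₁
  obtain ⟨k₂, hk₂₀, hk₂q, hrun₂, hk₂⟩ :=
    exists_run_end (R := fun k => ¬ (f (-k)).IsInterval)
      (by omega : 0 ≤ n - q) (by rw [neg_zero]; exact h₀) (by rw [hback]; simpa using hq)
  obtain ⟨k₄, hk₂₄, hk₄q, hrun₄, hk₄⟩ :=
    exists_run_end (R := fun k => (f (-k)).IsInterval)
      (by omega : k₂ ≤ n - q + 1) (not_not.mp hk₂)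
      (by rw [hback, show (n : ℤ) - (n - q + 1) = q - 1 by ring]; exact hq₁)
  refine false_of_interval_runs_around_max hc hline hnext hfar (l := -k₄) (a := -k₂)
    (by omega) (by omega) hk₁₀ hk₁₃ (by omega) hk₄
    (fun i h₁ h₂ => by simpa using hrun₄ (-i) (by omega) (by omega)) (fun i h₁ h₂ => ?_)
    (fun i h₁ h₂ => hrun₃ i h₁ h₂) hk₃ (hmax _ hk₄) (hmax _ hk₃)
  rcases le_or_gt 0 i with hi | hi
  · exact hrun₁ i hi h₂
  · have h : ¬ (f i).IsInterval := by simpa using hrun₂ (-i) (by omega) (by omega)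
    exact h

end IPSeg

section Model

variable {n : ℕ} {s : ZMod n → IPSeg}

theorem IsIPSEGModel.meets_add_one (hm : IsIPSEGModel (CycleGraph n) s) (hn : 2 ≤ n)
    (x : ZMod n) (i : ℤ) : (s (x + i)).Meets (s (x + ↑(i + 1))) := by
  have h := cycleGraph_adj_add_one hn (x + i)
  rw [Int.cast_add, Int.cast_one, ← add_assoc]
  exact (hm _ _ h.ne).mp h

theorem IsIPSEGModel.not_meets (hm : IsIPSEGModel (CycleGraph n) s) (x : ZMod n) {i j : ℤ}
    (h₁ : i + 2 ≤ j) (h₂ : j + 2 ≤ i + n) : ¬ (s (x + i)).Meets (s (x + j)) := fun h =>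
  have hx := cycleGraph_not_adj_add_intCast x h₁ h₂
  hx.2 ((hm _ _ hx.1).mpr h)

theorem IsIPSEGStarModel.exists_isPermutation (hm : IsIPSEGStarModel (CycleGraph n) s)
    (hn : 4 ≤ n) : ∃ w, (s w).IsPermutation := by
  obtain ⟨hm, c, -, hline⟩ := hm
  have : NeZero n := ⟨by omega⟩
  by_contra! hP
  have hI : ∀ w, (s w).IsInterval := by simpa using hP
  have hmeets : ∀ x y, (s x).Meets (s y) ↔ ((s x).shadow ∩ (s y).shadow).Nonempty :=
    fun x y => IPSeg.meets_iff_shadow_inter_nonempty (hI x) (hI y) (hline _ (hI x))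
      (hline _ (hI y))
  obtain ⟨x, hx⟩ := exists_uIcc_pred_inter_uIcc_succ_nonempty (fun x => (s x).p.1)
    (fun x => (s x).q.1) fun x =>
      (hmeets x (x + 1)).mp (by simpa using hm.meets_add_one (by omega) x 0)
  exact hm.not_meets x (i := -1) (j := 1) (by omega) (by omega)
    (by simpa [sub_eq_add_neg] using (hmeets _ _).mpr hx)

theorem IsIPSEGStarModel.eq_of_intArcStart (hm : IsIPSEGStarModel (CycleGraph n) s)
    (hn : 4 ≤ n) {v v' : ZMod n} (hv : IntArcStart n s v) (hv' : IntArcStart n s v') :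
    v = v' := by
  obtain ⟨hm, c, hc, hline⟩ := hm
  have : NeZero n := ⟨by omega⟩
  classical
  by_contra hne
  obtain ⟨w, hw, hmax⟩ : ∃ w, (s w).IsPermutation ∧
      ∀ u, (s u).IsPermutation → (s u).xAt c ≤ (s w).xAt c := by
    obtain ⟨w, hw, hmax⟩ := Finset.exists_max_image
      (Finset.univ.filter fun u => (s u).IsPermutation) (fun u => (s u).xAt c)
      ⟨v - 1, by simpa using hv.2⟩
    exact ⟨w, (Finset.mem_filter.mp hw).2, fun u hu => hmax u (by simpa using hu)⟩
  have key : ∀ {u u'}, IntArcStart n s u → IntArcStart n s u' →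
      ∀ {p q : ℤ}, 0 < p → p < q → q < n → w + p = u → w + q = u' → False := by
    rintro u u' hu hu' p q hp₀ hpq hqn rfl rfl
    exact IPSeg.false_of_two_interval_runs (f := fun k => s (w + k)) hc (by simp)
      (fun i => hline _) (hm.meets_add_one (by omega) w) (fun i j => hm.not_meets w)
      (by simpa using hw) (fun k hk => by simpa using hmax _ hk) hp₀ hpq hqn hu.1
      (by simpa [add_sub_assoc] using hu'.2) hu'.1
  obtain ⟨p, hp₀, hpn, hp⟩ := exists_intCast_add_eq_of_ne fun h : w = v => hw (h ▸ hv.1)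
  obtain ⟨q, hq₀, hqn, hq⟩ := exists_intCast_add_eq_of_ne fun h : w = v' => hw (h ▸ hv'.1)
  rcases lt_trichotomy p q with h | rfl | h
  · exact key hv hv' hp₀ h hqn hp hq
  · exact hne (hp.symm.trans hq)
  · exact key hv' hv hq₀ h hpn hq hp

end Model

/-- Every IP-SEG* model of a chordless cycle `C_n` (`n ≥ 4`) containing at least one
interval segment has exactly one interval arc, and hence exactly one permutation arc. -/
theorem ipsegstar_cycle_one_interval_arc (n : ℕ) (hn : 4 ≤ n)
    (s : ZMod n → IPSeg) (hm : IsIPSEGStarModel (CycleGraph n) s)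
    (hint : ∃ v : ZMod n, (s v).IsInterval) :
    (∃! v : ZMod n, IntArcStart n s v) ∧ (∃! v : ZMod n, PermArcStart n s v) := by
  have : NeZero n := ⟨by omega⟩
  obtain ⟨w, hw⟩ := hm.exists_isPermutation hn
  obtain ⟨v, hv⟩ := hint
  constructor
  · obtain ⟨u, hu⟩ := exists_and_not_sub_one (fun x => (s x).IsInterval) hw hv
    exact ⟨u, hu, fun u' hu' => hm.eq_of_intArcStart hn hu' hu⟩
  · obtain ⟨u, hu⟩ :=
      exists_and_not_sub_one (fun x => (s x).IsPermutation) (by simpa using hv) hw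
    refine ⟨u, hu, fun u' hu' => by_contra fun hne => ?_⟩
    obtain ⟨x, x', hxx', hx, hx'⟩ :=
      exists_two_starts_compl (fun x => (s x).IsPermutation) hu' hu hne
    exact hxx' (hm.eq_of_intArcStart hn (by simpa [IntArcStart] using hx)
      (by simpa [IntArcStart] using hx'))
end

section
/- Let G be a finite simple graph with an IP-SEG model v ↦ s(v), and let C be a clique of G such that the set C_int of vertices of C assigned interval segments is nonempty. Then: (1) all interval segments {s(v) : v ∈ C_int} lie on the same horizontal line Lᵢ; (2) the intersection ⋂_{v ∈ C_int} s(v) is nonempty; and (3) for every vertex w ∈ C assigned a permutation segment, the endpoint of s(w) lying on Lᵢ belongs to ⋂_{v ∈ C_int} s(v). -/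
/-!
Two interval segments that meet lie on the same line, so the interval segments of a clique
all lie on one line `y = c`, where they form a pairwise intersecting family of intervals;
in dimension one such a family has a common point, the supremum of the left endpoints.
A permutation segment meets `y = c` only at its endpoint there, so the point where it meets
an interval segment of the clique is that endpoint.
-/

theorem Set.iInter_Icc_nonempty_of_le {ι α : Type*} [ConditionallyCompleteLattice α]
    [Nonempty ι] {l r : ι → α} (h : ∀ i j, l i ≤ r j) : (⋂ i, Set.Icc (l i) (r i)).Nonempty :=
  ⟨⨆ i, l i, Set.mem_iInter.2 fun i =>
    ⟨le_ciSup ⟨r i, Set.forall_mem_range.2 fun j => h j i⟩ i, ciSup_le fun j => h j i⟩⟩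

theorem Prod.eq_left_of_mem_segment_of_snd_eq {𝕜 E F : Type*} [Field 𝕜] [LinearOrder 𝕜]
    [IsStrictOrderedRing 𝕜] [AddCommGroup E] [AddCommGroup F] [Module 𝕜 E] [Module 𝕜 F]
    {x y z : E × F} (hz : z ∈ segment 𝕜 x y) (hzx : z.2 = x.2) (hxy : x.2 ≠ y.2) : z = x := by
  rw [segment_eq_image_lineMap] at hz
  obtain ⟨θ, -, rfl⟩ := hz
  rw [AffineMap.snd_lineMap, AffineMap.lineMap_eq_left_iff] at hzx
  rw [hzx.resolve_left hxy, AffineMap.lineMap_apply_zero]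

namespace IPSeg

theorem carrier_nonempty (t : IPSeg) : t.carrier.Nonempty :=
  ⟨t.p, left_mem_segment ℝ _ _⟩

theorem mem_carrier_of_isInterval {t : IPSeg} (ht : t.IsInterval) {z : ℝ × ℝ} :
    z ∈ t.carrier ↔ z.2 = t.p.2 ∧ z.1 ∈ Set.uIcc t.p.1 t.q.1 := by
  have hcarrier : t.carrier = (fun x => (x, t.p.2)) '' segment ℝ t.p.1 t.q.1 := by
    rw [Prod.image_mk_segment_left]
    exact congrArg (segment ℝ t.p) (Prod.ext rfl ht.symm)
  rw [hcarrier, segment_eq_uIcc]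
  constructor
  · rintro ⟨x, hx, rfl⟩
    exact ⟨rfl, hx⟩
  · rintro ⟨h2, h1⟩
    exact ⟨z.1, h1, Prod.ext rfl h2.symm⟩

theorem line_eq_of_carrier_inter_nonempty {t t' : IPSeg} (ht : t.IsInterval)
    (ht' : t'.IsInterval) (h : (t.carrier ∩ t'.carrier).Nonempty) : t.p.2 = t'.p.2 := by
  obtain ⟨z, hz, hz'⟩ := h
  exact ((mem_carrier_of_isInterval ht).1 hz).1.symm.trans
    ((mem_carrier_of_isInterval ht').1 hz').1

theorem biInter_carrier_nonempty {ι : Type*} {S : Set ι} (hS : S.Nonempty) {t : ι → IPSeg}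
    (hint : ∀ i ∈ S, (t i).IsInterval)
    (hmeet : ∀ i ∈ S, ∀ j ∈ S, ((t i).carrier ∩ (t j).carrier).Nonempty) :
    (⋂ i ∈ S, (t i).carrier).Nonempty := by
  have := hS.to_subtype
  obtain ⟨i₀, hi₀⟩ := hS
  have hle : ∀ i j : S, (t i).p.1 ⊓ (t i).q.1 ≤ (t j).p.1 ⊔ (t j).q.1 := by
    intro i j
    obtain ⟨z, hzi, hzj⟩ := hmeet i i.2 j j.2
    exact ((mem_carrier_of_isInterval (hint i i.2)).1 hzi).2.1.trans
      ((mem_carrier_of_isInterval (hint j j.2)).1 hzj).2.2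
  obtain ⟨x, hx⟩ := Set.iInter_Icc_nonempty_of_le hle
  refine ⟨(x, (t i₀).p.2), Set.mem_iInter₂.2 fun i hi => ?_⟩
  refine (mem_carrier_of_isInterval (hint i hi)).2 ⟨?_, Set.mem_iInter.1 hx ⟨i, hi⟩⟩
  exact line_eq_of_carrier_inter_nonempty (hint i₀ hi₀) (hint i hi) (hmeet i₀ hi₀ i hi)

theorem eq_of_mem_carrier_of_isPermutation {t : IPSeg} (ht : t.IsPermutation)
    {e z : ℝ × ℝ} (he : e ∈ t.endpoints) (hz : z ∈ t.carrier) (hze : z.2 = e.2) : z = e := by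
  rcases he with rfl | rfl
  · exact Prod.eq_left_of_mem_segment_of_snd_eq hz hze ht
  · rw [carrier, segment_symm] at hz
    exact Prod.eq_left_of_mem_segment_of_snd_eq hz hze (Ne.symm ht)

end IPSeg

theorem IsIPSEGModel.carrier_inter_nonempty {V : Type*} {G : SimpleGraph V} {s : V → IPSeg}
    (hm : IsIPSEGModel G s) {C : Set V} (hC : G.IsClique C) {u v : V} (hu : u ∈ C)
    (hv : v ∈ C) : ((s u).carrier ∩ (s v).carrier).Nonempty := by
  by_cases huv : u = v
  · subst huv
    simpa using (s u).carrier_nonempty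
  · exact (hm u v huv).1 (hC hu hv huv)

theorem clique_interval_structure_general {V : Type} (G : SimpleGraph V)
    (s : V → IPSeg) (hm : IsIPSEGModel G s) (C : Set V) (hC : G.IsClique C)
    (hne : ∃ v ∈ C, (s v).IsInterval) :
    ∃ c : ℝ, (c = 1 ∨ c = 2) ∧
      (∀ v ∈ C, (s v).IsInterval → (s v).p.2 = c ∧ (s v).q.2 = c) ∧
      (⋂ v ∈ {v ∈ C | (s v).IsInterval}, (s v).carrier).Nonempty ∧
      (∀ w ∈ C, (s w).IsPermutation → ∀ e ∈ (s w).endpoints, e.2 = c →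
        e ∈ ⋂ v ∈ {v ∈ C | (s v).IsInterval}, (s v).carrier) := by
  obtain ⟨v₀, hv₀C, hv₀I⟩ := hne
  have hline : ∀ v ∈ C, (s v).IsInterval → (s v).p.2 = (s v₀).p.2 := fun v hv hvI =>
    IPSeg.line_eq_of_carrier_inter_nonempty hvI hv₀I (hm.carrier_inter_nonempty hC hv hv₀C)
  refine ⟨(s v₀).p.2, (s v₀).hp, fun v hv hvI => ⟨hline v hv hvI, hvI ▸ hline v hv hvI⟩,
    IPSeg.biInter_carrier_nonempty (S := {v ∈ C | (s v).IsInterval}) ⟨v₀, hv₀C, hv₀I⟩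
      (fun v hv => hv.2) (fun u hu v hv => hm.carrier_inter_nonempty hC hu.1 hv.1), ?_⟩
  intro w hw hwP e he hec
  refine Set.mem_iInter₂.2 fun v hvC => ?_
  obtain ⟨hv, hvI⟩ := hvC
  obtain ⟨z, hzw, hzv⟩ := hm.carrier_inter_nonempty hC hw hv
  have hz : z.2 = e.2 := by
    rw [((IPSeg.mem_carrier_of_isInterval hvI).1 hzv).1, hline v hv hvI, hec]
  rwa [← IPSeg.eq_of_mem_carrier_of_isPermutation hwP he hzw hz]

/-- Let `C` be a clique of a graph with an IP-SEG model such that some vertex of `C` is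
assigned an interval segment. Then all interval segments of `C` lie on one horizontal
line `y = c`, they have a common point, and for every vertex of `C` assigned a
permutation segment, its endpoint on the line `y = c` lies in that common intersection. -/
theorem clique_interval_structure {V : Type} [Fintype V] (G : SimpleGraph V)
    (s : V → IPSeg) (hm : IsIPSEGModel G s) (C : Set V) (hC : G.IsClique C)
    (hne : ∃ v ∈ C, (s v).IsInterval) :
    ∃ c : ℝ, (c = 1 ∨ c = 2) ∧
      (∀ v ∈ C, (s v).IsInterval → (s v).p.2 = c ∧ (s v).q.2 = c) ∧
      (⋂ v ∈ {v ∈ C | (s v).IsInterval}, (s v).carrier).Nonempty ∧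
      (∀ w ∈ C, (s w).IsPermutation → ∀ e ∈ (s w).endpoints, e.2 = c →
        e ∈ ⋂ v ∈ {v ∈ C | (s v).IsInterval}, (s v).carrier) :=
  clique_interval_structure_general G s hm C hC hne
end
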